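/- arXiv:2605.13025 — 3 statements merged into one kernel-verified Lean document; each statement's English description precedes it below -/
import Mathlib

section
/- Let A₁, A₂ be finite nonempty sets, Q : A₁ × A₂ → ℝ with max_{a₁,a₂} |Q(a₁,a₂)| ≤ B, η > 0, and π₁ʳᵉᶠ ∈ Δ(A₁), π₂ʳᵉᶠ ∈ Δ(A₂) strictly positive. Let (μ̂, ν̂) be the unique saddle point of the KL-regularized objective J_Q, and let (π₁⁽ᵗ⁾, π₂⁽ᵗ⁾) be the SOS-MD iterates with stepsizes γ_t = 2η/(t+2). Then for every T ≥ 1: ‖μ̂ − π₁⁽ᵀ⁾‖₁ + ‖ν̂ − π₂⁽ᵀ⁾‖₁ ≤ 12·η·B / √(T+1). -/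
/-!
Both components of the saddle point are Gibbs distributions, `μ̂ ∝ π₁ʳᵉᶠ exp (η Q ν̂)` and
`ν̂ ∝ π₂ʳᵉᶠ exp (-η Qᵀ μ̂)`, so an SOS-MD step is a geometric mixture of the current iterate and the
saddle point, tilted by the error of the current payoff vector. The three-point identity of mirror
descent then gives, for `D t = KL(μ̂ ‖ π₁⁽ᵗ⁾) + KL(ν̂ ‖ π₂⁽ᵗ⁾)` and `γ t = 2η / (t + 2)`,
`(t + 2) D (t + 1) ≤ t (D t - KL(π⁽ᵗ⁺¹⁾ ‖ π⁽ᵗ⁾)) + 2η C t`, where the cross term `C t` is bilinear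
in the movement `π⁽ᵗ⁺¹⁾ - π⁽ᵗ⁾` and hence at most `2B` times its `ℓ¹` size. Pinsker's inequality
trades it against the KL term, leaving `(t + 2) D (t + 1) ≤ t D t + 16 η² B² / t`, hence
`D T ≤ 32 η² B² / (T + 1)`; Pinsker once more converts this into the `ℓ¹` bound.
-/

open Finset

/-- The probability simplex on a finite type: nonnegative entries summing to one. -/
def IsSimplex {A : Type*} [Fintype A] (p : A → ℝ) : Prop :=
  (∀ a, 0 ≤ p a) ∧ ∑ a, p a = 1

/-- KL divergence between two distributions on a finite type
(with the convention `0 * log 0 = 0`, which holds in Lean since `Real.log 0 = 0`). -/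
noncomputable def KLdiv {A : Type*} [Fintype A] (p q : A → ℝ) : ℝ :=
  ∑ a, p a * Real.log (p a / q a)

/-- The KL-regularized zero-sum game objective. -/
noncomputable def J {A₁ A₂ : Type*} [Fintype A₁] [Fintype A₂]
    (G : A₁ × A₂ → ℝ) (η : ℝ) (π₁ref : A₁ → ℝ) (π₂ref : A₂ → ℝ)
    (μ : A₁ → ℝ) (ν : A₂ → ℝ) : ℝ :=
  (∑ a₁, ∑ a₂, μ a₁ * ν a₂ * G (a₁, a₂))
    - η⁻¹ * KLdiv μ π₁ref + η⁻¹ * KLdiv ν π₂ref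

/-- `(μs, νs)` is a saddle point of `J_G` over the product of simplices. -/
def IsSaddle {A₁ A₂ : Type*} [Fintype A₁] [Fintype A₂]
    (G : A₁ × A₂ → ℝ) (η : ℝ) (π₁ref : A₁ → ℝ) (π₂ref : A₂ → ℝ)
    (μs : A₁ → ℝ) (νs : A₂ → ℝ) : Prop :=
  IsSimplex μs ∧ IsSimplex νs ∧
  (∀ μ : A₁ → ℝ, IsSimplex μ → J G η π₁ref π₂ref μ νs ≤ J G η π₁ref π₂ref μs νs) ∧
  (∀ ν : A₂ → ℝ, IsSimplex ν → J G η π₁ref π₂ref μs νs ≤ J G η π₁ref π₂ref μs ν)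

/-- The SOS-MD self-play iterates: initialization at the reference policies and
normalized multiplicative (mirror-descent) updates with stepsizes `γ_t`. -/
def IsSOSMD {A₁ A₂ : Type*} [Fintype A₁] [Fintype A₂]
    (Q : A₁ × A₂ → ℝ) (η : ℝ) (π₁ref : A₁ → ℝ) (π₂ref : A₂ → ℝ)
    (γ : ℕ → ℝ) (π₁ : ℕ → A₁ → ℝ) (π₂ : ℕ → A₂ → ℝ) : Prop :=
  π₁ 0 = π₁ref ∧ π₂ 0 = π₂ref ∧
  (∀ t : ℕ, ∀ a₁ : A₁, π₁ (t + 1) a₁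
    = (π₁ t a₁ ^ (1 - γ t / η)
        * Real.exp (γ t * ∑ a₂, π₂ t a₂ * Q (a₁, a₂))
        * π₁ref a₁ ^ (γ t / η))
      / ∑ b₁, (π₁ t b₁ ^ (1 - γ t / η)
        * Real.exp (γ t * ∑ a₂, π₂ t a₂ * Q (b₁, a₂))
        * π₁ref b₁ ^ (γ t / η))) ∧
  (∀ t : ℕ, ∀ a₂ : A₂, π₂ (t + 1) a₂
    = (π₂ t a₂ ^ (1 - γ t / η)
        * Real.exp (-(γ t) * ∑ a₁, π₁ t a₁ * Q (a₁, a₂))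
        * π₂ref a₂ ^ (γ t / η))
      / ∑ b₂, (π₂ t b₂ ^ (1 - γ t / η)
        * Real.exp (-(γ t) * ∑ a₁, π₁ t a₁ * Q (a₁, b₂))
        * π₂ref b₂ ^ (γ t / η)))

open Real (log exp)

section Pinsker

variable {A : Type*} [Fintype A]

theorem hasDerivAt_log_sub_pinsker {t : ℝ} (ht : 0 < t) :
    HasDerivAt (fun t ↦ log t - (t - 1) * (5 * t + 1) / (2 * t * (t + 2)))
      ((t - 1) ^ 3 / (t ^ 2 * (t + 2) ^ 2)) t := by
  have hnum : HasDerivAt (fun t ↦ (t - 1) * (5 * t + 1)) (10 * t - 4) t :=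
    (((hasDerivAt_id' t).sub_const 1).mul
      (((hasDerivAt_id' t).const_mul 5).add_const 1)).congr_deriv (by ring)
  have hden : HasDerivAt (fun t ↦ 2 * t * (t + 2)) (4 * t + 4) t :=
    (((hasDerivAt_id' t).const_mul 2).mul ((hasDerivAt_id' t).add_const 2)).congr_deriv
      (by ring)
  refine ((Real.hasDerivAt_log ht.ne').sub (hnum.div hden (by positivity))).congr_deriv ?_
  field_simp
  ring

theorem sub_one_mul_div_le_log {t : ℝ} (ht : 0 < t) :
    (t - 1) * (5 * t + 1) / (2 * t * (t + 2)) ≤ log t := by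
  set h : ℝ → ℝ := fun t ↦ log t - (t - 1) * (5 * t + 1) / (2 * t * (t + 2))
  set h' : ℝ → ℝ := fun t ↦ (t - 1) ^ 3 / (t ^ 2 * (t + 2) ^ 2)
  have hderiv : ∀ x : ℝ, 0 < x → HasDerivWithinAt h (h' x) (Set.Ioi 0) x :=
    fun x hx ↦ (hasDerivAt_log_sub_pinsker hx).hasDerivWithinAt
  have hcont : ContinuousOn h (Set.Ioi 0) := fun x hx ↦ (hderiv x hx).continuousWithinAt
  suffices h 1 ≤ h t by norm_num [h] at this; linarith
  rcases le_total t 1 with ht1 | ht1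
  · refine antitoneOn_of_hasDerivWithinAt_nonpos (f' := h') (convex_Ioc 0 1)
      (hcont.mono Set.Ioc_subset_Ioi_self) (fun x hx ↦ ?_) (fun x hx ↦ ?_)
      ⟨ht, ht1⟩ ⟨one_pos, le_rfl⟩ ht1
    · rw [interior_Ioc] at hx ⊢
      exact (hderiv x hx.1).mono Set.Ioo_subset_Ioi_self
    · rw [interior_Ioc] at hx
      have : (x - 1) ^ 3 ≤ 0 := Odd.pow_nonpos (by decide) (by linarith [hx.2])
      exact div_nonpos_of_nonpos_of_nonneg this (by positivity)
  · refine monotoneOn_of_hasDerivWithinAt_nonneg (f' := h') (convex_Ici 1)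
      (hcont.mono fun x hx ↦ lt_of_lt_of_le one_pos (Set.mem_Ici.1 hx)) (fun x hx ↦ ?_)
      (fun x hx ↦ ?_) Set.self_mem_Ici ht1 ht1
    · rw [interior_Ici] at hx ⊢
      exact (hderiv x (lt_trans one_pos hx)).mono
        fun y (hy : 1 < y) ↦ (lt_trans one_pos hy : 0 < y)
    · rw [interior_Ici] at hx
      have : 0 ≤ (x - 1) ^ 3 := pow_nonneg (by linarith [hx.out]) 3
      positivity

theorem three_mul_sq_div_le_mul_log_div {x y : ℝ} (hx : 0 ≤ x) (hy : 0 < y) :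
    3 * (x - y) ^ 2 / (2 * (x + 2 * y)) ≤ x * log (x / y) - x + y := by
  rcases hx.eq_or_lt with rfl | hx
  · rw [zero_div, Real.log_zero]
    field_simp
    nlinarith
  · calc 3 * (x - y) ^ 2 / (2 * (x + 2 * y))
        = x * ((x / y - 1) * (5 * (x / y) + 1) / (2 * (x / y) * (x / y + 2))) - x + y := by
          field_simp
          ring
      _ ≤ x * log (x / y) - x + y := by
          gcongr
          exact sub_one_mul_div_le_log (by positivity)

theorem klDiv_self (p : A → ℝ) : KLdiv p p = 0 :=
  sum_eq_zero fun a _ ↦ by by_cases h : p a = 0 <;> simp [h]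

/-- Pinsker's inequality, via Sedrakyan's inequality with the weights `2 (p + 2 q) / 3`, which sum
to `2`, and the pointwise bound above. -/
theorem sq_sum_abs_sub_le_two_mul_klDiv {p q : A → ℝ} (hp : IsSimplex p)
    (hq : ∑ a, q a = 1) (hq0 : ∀ a, 0 < q a) :
    (∑ a, |p a - q a|) ^ 2 ≤ 2 * KLdiv p q := by
  have hw : ∀ a ∈ univ, 0 < 2 * (p a + 2 * q a) / 3 := fun a _ ↦ by
    have := hp.1 a; have := hq0 a; positivity
  have hsum : ∑ a, 2 * (p a + 2 * q a) / 3 = 2 := by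
    simp only [← sum_div, ← mul_sum, sum_add_distrib, hp.2, hq]
    norm_num
  calc (∑ a, |p a - q a|) ^ 2
      = 2 * ((∑ a, |p a - q a|) ^ 2 / ∑ a, 2 * (p a + 2 * q a) / 3) := by
        rw [hsum]; ring
    _ ≤ 2 * ∑ a, |p a - q a| ^ 2 / (2 * (p a + 2 * q a) / 3) := by
        gcongr; exact sq_sum_div_le_sum_sq_div _ _ hw
    _ ≤ 2 * ∑ a, (p a * log (p a / q a) - p a + q a) := by
        gcongr with a
        rw [sq_abs, div_div_eq_mul_div, mul_comm]
        exact three_mul_sq_div_le_mul_log_div (hp.1 a) (hq0 a)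
    _ = 2 * KLdiv p q := by
        simp only [sum_add_distrib, sum_sub_distrib, hp.2, hq, KLdiv]
        ring

theorem klDiv_nonneg {p q : A → ℝ} (hp : IsSimplex p) (hq : ∑ a, q a = 1)
    (hq0 : ∀ a, 0 < q a) : 0 ≤ KLdiv p q := by
  nlinarith [sq_sum_abs_sub_le_two_mul_klDiv hp hq hq0, sq_nonneg (∑ a, |p a - q a|)]

theorem eq_of_klDiv_nonpos {p q : A → ℝ} (hp : IsSimplex p) (hq : ∑ a, q a = 1)
    (hq0 : ∀ a, 0 < q a) (h : KLdiv p q ≤ 0) : p = q := by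
  have hsq := sq_sum_abs_sub_le_two_mul_klDiv hp hq hq0
  have hl1 : ∑ a, |p a - q a| = 0 := pow_eq_zero_iff (n := 2) (by norm_num) |>.1 <|
    le_antisymm (by linarith) (sq_nonneg _)
  funext a
  rw [sum_eq_zero_iff_of_nonneg fun a _ ↦ abs_nonneg _] at hl1
  exact sub_eq_zero.1 <| abs_eq_zero.1 <| hl1 a (mem_univ a)

theorem sum_abs_sub_le_two {p q : A → ℝ} (hp : IsSimplex p) (hq : IsSimplex q) :
    ∑ a, |p a - q a| ≤ 2 := by
  calc ∑ a, |p a - q a| ≤ ∑ a, (p a + q a) := by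
        gcongr with a
        exact (abs_sub _ _).trans_eq (by rw [abs_of_nonneg (hp.1 a), abs_of_nonneg (hq.1 a)])
    _ = 2 := by rw [sum_add_distrib, hp.2, hq.2]; norm_num

end Pinsker

section Gibbs

variable {A : Type*} [Fintype A]

/-- With `π` the current iterate and `ρ` the reference policy this is one SOS-MD step; with `c = 1`
it is the Gibbs distribution `ρ * exp f / Z`. -/
noncomputable def gibbs (π ρ : A → ℝ) (c : ℝ) (f : A → ℝ) (a : A) : ℝ :=
  π a ^ (1 - c) * exp (f a) * ρ a ^ c / ∑ b, π b ^ (1 - c) * exp (f b) * ρ b ^ c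

variable {π ρ f : A → ℝ} {c : ℝ}

theorem sum_gibbs_weight_pos [Nonempty A] (hπ : ∀ a, 0 < π a) (hρ : ∀ a, 0 < ρ a) :
    0 < ∑ b, π b ^ (1 - c) * exp (f b) * ρ b ^ c :=
  sum_pos (fun b _ ↦ by have := hπ b; have := hρ b; positivity) univ_nonempty

theorem gibbs_pos [Nonempty A] (hπ : ∀ a, 0 < π a) (hρ : ∀ a, 0 < ρ a) (a : A) :
    0 < gibbs π ρ c f a := by
  have := hπ a; have := hρ a; have := sum_gibbs_weight_pos (c := c) (f := f) hπ hρ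
  unfold gibbs; positivity

theorem sum_gibbs [Nonempty A] (hπ : ∀ a, 0 < π a) (hρ : ∀ a, 0 < ρ a) :
    ∑ a, gibbs π ρ c f a = 1 := by
  unfold gibbs
  rw [← sum_div, div_self (sum_gibbs_weight_pos hπ hρ).ne']

theorem log_gibbs [Nonempty A] (hπ : ∀ a, 0 < π a) (hρ : ∀ a, 0 < ρ a) (a : A) :
    log (gibbs π ρ c f a) = (1 - c) * log (π a) + c * log (ρ a) + f a
      - log (∑ b, π b ^ (1 - c) * exp (f b) * ρ b ^ c) := by
  have := hπ a; have := hρ a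
  unfold gibbs
  rw [Real.log_div (by positivity) (sum_gibbs_weight_pos hπ hρ).ne', Real.log_mul (by positivity)
    (by positivity), Real.log_mul (by positivity) (by positivity), Real.log_exp,
    Real.log_rpow (hπ a), Real.log_rpow (hρ a)]
  ring

variable {p π' : A → ℝ} {L : ℝ}

theorem klDiv_sub_eq_of_log_eq (hπ' : ∀ a, π' a ≠ 0) (hπ : ∀ a, π a ≠ 0) (hρ : ∀ a, ρ a ≠ 0)
    (hlog : ∀ a, log (π' a) = (1 - c) * log (π a) + c * log (ρ a) + f a - L) (p : A → ℝ) :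
    KLdiv p π' - (1 - c) * KLdiv p π - c * KLdiv p ρ = L * ∑ a, p a - ∑ a, p a * f a := by
  simp only [KLdiv, mul_sum, ← sum_sub_distrib]
  refine sum_congr rfl fun a _ ↦ ?_
  by_cases hp : p a = 0
  · simp [hp]
  · rw [Real.log_div hp (hπ' a), Real.log_div hp (hπ a), Real.log_div hp (hρ a), hlog]
    ring

/-- The three-point identity of mirror descent. -/
theorem klDiv_eq_of_log_eq (hp : ∑ a, p a = 1) (hπ'1 : ∑ a, π' a = 1) (hπ' : ∀ a, π' a ≠ 0)
    (hπ : ∀ a, π a ≠ 0) (hρ : ∀ a, ρ a ≠ 0)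
    (hlog : ∀ a, log (π' a) = (1 - c) * log (π a) + c * log (ρ a) + f a - L) :
    KLdiv p π' = (1 - c) * (KLdiv p π - KLdiv π' π) + c * (KLdiv p ρ - KLdiv π' ρ)
      - ∑ a, (p a - π' a) * f a := by
  have h := klDiv_sub_eq_of_log_eq hπ' hπ hρ hlog p
  have h' := klDiv_sub_eq_of_log_eq hπ' hπ hρ hlog π'
  rw [hp] at h
  rw [klDiv_self, hπ'1] at h'
  simp only [sub_mul, sum_sub_distrib]
  linarith

theorem eq_gibbs_of_forall_le [Nonempty A] {η : ℝ} {μ q : A → ℝ} (hη : 0 < η)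
    (hρ : ∀ a, 0 < ρ a) (hμ : IsSimplex μ)
    (hmax : ∀ μ', IsSimplex μ' →
      ∑ a, μ' a * q a - η⁻¹ * KLdiv μ' ρ ≤ ∑ a, μ a * q a - η⁻¹ * KLdiv μ ρ) :
    μ = gibbs ρ ρ 1 (fun a ↦ η * q a) := by
  set g := gibbs ρ ρ 1 (fun a ↦ η * q a)
  have hg : ∀ a, 0 < g a := gibbs_pos hρ hρ
  have hg1 : ∑ a, g a = 1 := sum_gibbs hρ hρ
  have hid := klDiv_eq_of_log_eq hμ.2 hg1 (fun a ↦ (hg a).ne') (fun a ↦ (hρ a).ne')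
    (fun a ↦ (hρ a).ne') (log_gibbs hρ hρ)
  have hle := hmax g ⟨fun a ↦ (hg a).le, hg1⟩
  have hsum : ∑ a, (μ a - g a) * (η * q a) = η * (∑ a, μ a * q a - ∑ a, g a * q a) := by
    rw [mul_sub, mul_sum, mul_sum, ← sum_sub_distrib]
    exact sum_congr rfl fun a _ ↦ by ring
  refine eq_of_klDiv_nonpos hμ hg1 hg ?_
  rw [hid, hsum, sub_self, zero_mul, zero_add, one_mul]
  have := mul_le_mul_of_nonneg_left hle hη.le
  rw [mul_sub, mul_sub, ← mul_assoc, ← mul_assoc, mul_inv_cancel₀ hη.ne'] at this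
  linarith

/-- One SOS-MD step measured from the Gibbs point `σ ∝ ρ exp (η qhat)`: since
`σ ^ (γ / η) ∝ ρ ^ (γ / η) exp (γ qhat)`, the step is a mixture of `π` and `σ` tilted by
`exp (γ (q - qhat))`, and the three-point identity applies with `p = σ`. -/
theorem mul_klDiv_gibbs_step [Nonempty A] {q qhat : A → ℝ} {η γ : ℝ} (hη : η ≠ 0)
    (hπ : ∀ a, 0 < π a) (hρ : ∀ a, 0 < ρ a) :
    η * KLdiv (gibbs ρ ρ 1 (fun a ↦ η * qhat a)) (gibbs π ρ (γ / η) (fun a ↦ γ * q a))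
      = (η - γ) * (KLdiv (gibbs ρ ρ 1 (fun a ↦ η * qhat a)) π
          - KLdiv (gibbs π ρ (γ / η) (fun a ↦ γ * q a)) π)
        - γ * KLdiv (gibbs π ρ (γ / η) (fun a ↦ γ * q a)) (gibbs ρ ρ 1 (fun a ↦ η * qhat a))
        + η * γ * ∑ a, (gibbs π ρ (γ / η) (fun a ↦ γ * q a) a
            - gibbs ρ ρ 1 (fun a ↦ η * qhat a) a) * (q a - qhat a) := by
  set σ := gibbs ρ ρ 1 (fun a ↦ η * qhat a)
  set π' := gibbs π ρ (γ / η) (fun a ↦ γ * q a)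
  have hσ : ∀ a, 0 < σ a := gibbs_pos hρ hρ
  have hπ' : ∀ a, 0 < π' a := gibbs_pos hπ hρ
  have hlog : ∀ a, log (π' a) = (1 - γ / η) * log (π a) + γ / η * log (σ a)
      + γ * (q a - qhat a) - (log (∑ b, π b ^ (1 - γ / η) * exp (γ * q b) * ρ b ^ (γ / η))
        - γ / η * log (∑ b, ρ b ^ ((1 : ℝ) - 1) * exp (η * qhat b) * ρ b ^ (1 : ℝ))) := fun a ↦ by
    rw [log_gibbs hπ hρ, log_gibbs hρ hρ]
    linear_combination (-qhat a) * div_mul_cancel₀ γ hη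
  have h := klDiv_eq_of_log_eq (p := σ) (π' := π') (sum_gibbs hρ hρ) (sum_gibbs hπ hρ)
    (fun a ↦ (hπ' a).ne') (fun a ↦ (hπ a).ne') (fun a ↦ (hσ a).ne') hlog
  rw [klDiv_self] at h
  rw [h]
  have hsum : ∑ a, (σ a - π' a) * (γ * (q a - qhat a))
      = -γ * ∑ a, (π' a - σ a) * (q a - qhat a) := by
    rw [mul_sum]
    exact sum_congr rfl fun a _ ↦ by ring
  rw [hsum]
  field_simp
  ring

theorem pos_of_gibbs_iterate [Nonempty A] {π : ℕ → A → ℝ} {c : ℕ → ℝ} {f : ℕ → A → ℝ}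
    (hρ : ∀ a, 0 < ρ a) (h0 : ∀ a, 0 < π 0 a)
    (hstep : ∀ t, π (t + 1) = gibbs (π t) ρ (c t) (f t)) (t : ℕ) (a : A) : 0 < π t a := by
  induction t generalizing a with
  | zero => exact h0 a
  | succ t ih => rw [hstep]; exact gibbs_pos ih hρ a

end Gibbs

section Game

variable {A₁ A₂ : Type*} [Fintype A₁] [Fintype A₂]

def payoff (Q : A₁ × A₂ → ℝ) (x : A₁ → ℝ) (y : A₂ → ℝ) : ℝ :=
  ∑ a₁, ∑ a₂, x a₁ * y a₂ * Q (a₁, a₂)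

variable {Q : A₁ × A₂ → ℝ} {B : ℝ}

theorem J_eq_payoff (η : ℝ) (π₁ref : A₁ → ℝ) (π₂ref : A₂ → ℝ) (μ : A₁ → ℝ) (ν : A₂ → ℝ) :
    J Q η π₁ref π₂ref μ ν = payoff Q μ ν - η⁻¹ * KLdiv μ π₁ref + η⁻¹ * KLdiv ν π₂ref :=
  rfl

theorem payoff_eq_sum_fst (x : A₁ → ℝ) (y : A₂ → ℝ) :
    payoff Q x y = ∑ a₁, x a₁ * ∑ a₂, y a₂ * Q (a₁, a₂) := by
  simp only [payoff, mul_sum, mul_assoc]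

theorem payoff_eq_sum_snd (x : A₁ → ℝ) (y : A₂ → ℝ) :
    payoff Q x y = ∑ a₂, y a₂ * ∑ a₁, x a₁ * Q (a₁, a₂) := by
  rw [payoff, sum_comm]
  simp only [mul_sum]
  exact sum_congr rfl fun _ _ ↦ sum_congr rfl fun _ _ ↦ by ring

theorem payoff_sub_payoff_eq (x x' μ : A₁ → ℝ) (y y' ν : A₂ → ℝ) :
    payoff Q (x' - μ) (y - ν) - payoff Q (x - μ) (y' - ν)
      = payoff Q (x' - x) (y - ν) - payoff Q (x - μ) (y' - y) := by
  simp only [payoff, ← sum_sub_distrib, Pi.sub_apply]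
  exact sum_congr rfl fun _ _ ↦ sum_congr rfl fun _ _ ↦ by ring

theorem abs_payoff_le (hQ : ∀ a₁ a₂, |Q (a₁, a₂)| ≤ B) (x : A₁ → ℝ) (y : A₂ → ℝ) :
    |payoff Q x y| ≤ B * (∑ a₁, |x a₁|) * ∑ a₂, |y a₂| := by
  calc |payoff Q x y| ≤ ∑ a₁, ∑ a₂, |x a₁ * y a₂ * Q (a₁, a₂)| :=
        (abs_sum_le_sum_abs _ _).trans (sum_le_sum fun _ _ ↦ abs_sum_le_sum_abs _ _)
    _ ≤ ∑ a₁, ∑ a₂, B * |x a₁| * |y a₂| := by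
        gcongr with a₁ _ a₂
        rw [abs_mul, abs_mul]
        nlinarith [hQ a₁ a₂, abs_nonneg (x a₁), abs_nonneg (y a₂),
          mul_nonneg (abs_nonneg (x a₁)) (abs_nonneg (y a₂))]
    _ = B * (∑ a₁, |x a₁|) * ∑ a₂, |y a₂| := by
        rw [mul_assoc, sum_mul_sum, mul_sum]
        simp only [mul_sum, mul_assoc]

theorem payoff_sub_payoff_le (hQ : ∀ a₁ a₂, |Q (a₁, a₂)| ≤ B) (hB : 0 ≤ B)
    {x x' : A₁ → ℝ} {y y' : A₂ → ℝ} (hy : ∑ a₂, |y a₂| ≤ 2) (hx' : ∑ a₁, |x' a₁| ≤ 2) :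
    payoff Q x y - payoff Q x' y' ≤ 2 * B * ((∑ a₁, |x a₁|) + ∑ a₂, |y' a₂|) := by
  have h := abs_payoff_le hQ x y
  have h' := abs_payoff_le hQ x' y'
  have hx := sum_nonneg fun a₁ (_ : a₁ ∈ univ) ↦ abs_nonneg (x a₁)
  have hy' := sum_nonneg fun a₂ (_ : a₂ ∈ univ) ↦ abs_nonneg (y' a₂)
  have : B * (∑ a₁, |x a₁|) * ∑ a₂, |y a₂| ≤ B * (∑ a₁, |x a₁|) * 2 := by gcongr
  have : B * (∑ a₁, |x' a₁|) * ∑ a₂, |y' a₂| ≤ B * 2 * ∑ a₂, |y' a₂| := by gcongr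
  linarith [le_abs_self (payoff Q x y), neg_abs_le (payoff Q x' y')]

theorem mul_add_sub_mul_sq_add_sq_le {t b d₁ d₂ : ℝ} (ht : 0 < t) :
    b * (d₁ + d₂) - t * (d₁ ^ 2 + d₂ ^ 2) / 2 ≤ b ^ 2 / t := by
  rw [le_div_iff₀ ht]
  nlinarith [sq_nonneg (t * d₁ - b), sq_nonneg (t * d₂ - b)]

variable {η : ℝ} {π₁ref : A₁ → ℝ} {π₂ref : A₂ → ℝ} {μ : A₁ → ℝ} {ν : A₂ → ℝ}

theorem IsSaddle.fst_eq_gibbs [Nonempty A₁] (h : IsSaddle Q η π₁ref π₂ref μ ν) (hη : 0 < η)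
    (h₁pos : ∀ a, 0 < π₁ref a) :
    μ = gibbs π₁ref π₁ref 1 (fun a₁ ↦ η * ∑ a₂, ν a₂ * Q (a₁, a₂)) := by
  refine eq_gibbs_of_forall_le hη h₁pos h.1 fun μ' hμ' ↦ ?_
  have := h.2.2.1 μ' hμ'
  simp only [J_eq_payoff, payoff_eq_sum_fst] at this
  linarith

theorem IsSaddle.snd_eq_gibbs [Nonempty A₂] (h : IsSaddle Q η π₁ref π₂ref μ ν) (hη : 0 < η)
    (h₂pos : ∀ a, 0 < π₂ref a) :
    ν = gibbs π₂ref π₂ref 1 (fun a₂ ↦ η * -∑ a₁, μ a₁ * Q (a₁, a₂)) := by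
  refine eq_gibbs_of_forall_le hη h₂pos h.2.1 fun ν' hν' ↦ ?_
  have := h.2.2.2 ν' hν'
  simp only [J_eq_payoff, payoff_eq_sum_snd] at this
  simp only [mul_neg, sum_neg_distrib]
  linarith

theorem IsSaddle.fst_pos [Nonempty A₁] (h : IsSaddle Q η π₁ref π₂ref μ ν) (hη : 0 < η)
    (h₁pos : ∀ a, 0 < π₁ref a) (a : A₁) : 0 < μ a :=
  h.fst_eq_gibbs hη h₁pos ▸ gibbs_pos h₁pos h₁pos a

theorem IsSaddle.snd_pos [Nonempty A₂] (h : IsSaddle Q η π₁ref π₂ref μ ν) (hη : 0 < η)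
    (h₂pos : ∀ a, 0 < π₂ref a) (a : A₂) : 0 < ν a :=
  h.snd_eq_gibbs hη h₂pos ▸ gibbs_pos h₂pos h₂pos a

variable {γ : ℕ → ℝ} {π₁ : ℕ → A₁ → ℝ} {π₂ : ℕ → A₂ → ℝ}

theorem IsSOSMD.fst_succ (h : IsSOSMD Q η π₁ref π₂ref γ π₁ π₂) (t : ℕ) :
    π₁ (t + 1) = gibbs (π₁ t) π₁ref (γ t / η) (fun a₁ ↦ γ t * ∑ a₂, π₂ t a₂ * Q (a₁, a₂)) :=
  funext (h.2.2.1 t)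

theorem IsSOSMD.snd_succ (h : IsSOSMD Q η π₁ref π₂ref γ π₁ π₂) (t : ℕ) :
    π₂ (t + 1) = gibbs (π₂ t) π₂ref (γ t / η) (fun a₂ ↦ γ t * -∑ a₁, π₁ t a₁ * Q (a₁, a₂)) := by
  funext a₂
  simp only [h.2.2.2 t a₂, gibbs, mul_neg, neg_mul]

theorem IsSOSMD.fst_pos [Nonempty A₁] (h : IsSOSMD Q η π₁ref π₂ref γ π₁ π₂)
    (h₁pos : ∀ a, 0 < π₁ref a) : ∀ t a, 0 < π₁ t a :=
  pos_of_gibbs_iterate h₁pos (h.1 ▸ h₁pos) h.fst_succ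

theorem IsSOSMD.snd_pos [Nonempty A₂] (h : IsSOSMD Q η π₁ref π₂ref γ π₁ π₂)
    (h₂pos : ∀ a, 0 < π₂ref a) : ∀ t a, 0 < π₂ t a :=
  pos_of_gibbs_iterate h₂pos (h.2.1 ▸ h₂pos) h.snd_succ

theorem IsSOSMD.fst_isSimplex [Nonempty A₁] (h : IsSOSMD Q η π₁ref π₂ref γ π₁ π₂)
    (h₁ : IsSimplex π₁ref) (h₁pos : ∀ a, 0 < π₁ref a) : ∀ t, IsSimplex (π₁ t)
  | 0 => h.1 ▸ h₁
  | t + 1 => ⟨fun a ↦ (h.fst_pos h₁pos _ a).le, h.fst_succ t ▸ sum_gibbs (h.fst_pos h₁pos t) h₁pos⟩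

theorem IsSOSMD.snd_isSimplex [Nonempty A₂] (h : IsSOSMD Q η π₁ref π₂ref γ π₁ π₂)
    (h₂ : IsSimplex π₂ref) (h₂pos : ∀ a, 0 < π₂ref a) : ∀ t, IsSimplex (π₂ t)
  | 0 => h.2.1 ▸ h₂
  | t + 1 => ⟨fun a ↦ (h.snd_pos h₂pos _ a).le, h.snd_succ t ▸ sum_gibbs (h.snd_pos h₂pos t) h₂pos⟩

theorem IsSOSMD.klDiv_step [Nonempty A₁] [Nonempty A₂] (h : IsSOSMD Q η π₁ref π₂ref γ π₁ π₂)
    (hs : IsSaddle Q η π₁ref π₂ref μ ν) (hη : 0 < η) (h₁pos : ∀ a, 0 < π₁ref a)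
    (h₂pos : ∀ a, 0 < π₂ref a) (t : ℕ) :
    η * (KLdiv μ (π₁ (t + 1)) + KLdiv ν (π₂ (t + 1)))
      = (η - γ t) * (KLdiv μ (π₁ t) + KLdiv ν (π₂ t)
          - (KLdiv (π₁ (t + 1)) (π₁ t) + KLdiv (π₂ (t + 1)) (π₂ t)))
        - γ t * (KLdiv (π₁ (t + 1)) μ + KLdiv (π₂ (t + 1)) ν)
        + η * γ t * (payoff Q (π₁ (t + 1) - μ) (π₂ t - ν)
          - payoff Q (π₁ t - μ) (π₂ (t + 1) - ν)) := by
  have h₁ := mul_klDiv_gibbs_step (γ := γ t) (q := fun a₁ ↦ ∑ a₂, π₂ t a₂ * Q (a₁, a₂))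
    (qhat := fun a₁ ↦ ∑ a₂, ν a₂ * Q (a₁, a₂)) hη.ne' (h.fst_pos h₁pos t) h₁pos
  have h₂ := mul_klDiv_gibbs_step (γ := γ t) (q := fun a₂ ↦ -∑ a₁, π₁ t a₁ * Q (a₁, a₂))
    (qhat := fun a₂ ↦ -∑ a₁, μ a₁ * Q (a₁, a₂)) hη.ne' (h.snd_pos h₂pos t) h₂pos
  rw [← hs.fst_eq_gibbs hη h₁pos, ← h.fst_succ] at h₁
  rw [← hs.snd_eq_gibbs hη h₂pos, ← h.snd_succ] at h₂
  have c₁ : ∑ a₁, (π₁ (t + 1) a₁ - μ a₁) * (∑ a₂, π₂ t a₂ * Q (a₁, a₂) - ∑ a₂, ν a₂ * Q (a₁, a₂))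
      = payoff Q (π₁ (t + 1) - μ) (π₂ t - ν) := by
    simp only [payoff_eq_sum_fst, Pi.sub_apply, sub_mul, sum_sub_distrib]
  have c₂ : ∑ a₂, (π₂ (t + 1) a₂ - ν a₂)
        * (-∑ a₁, π₁ t a₁ * Q (a₁, a₂) - -∑ a₁, μ a₁ * Q (a₁, a₂))
      = -payoff Q (π₁ t - μ) (π₂ (t + 1) - ν) := by
    rw [payoff_eq_sum_snd, ← sum_neg_distrib]
    refine sum_congr rfl fun a₂ _ ↦ ?_
    simp only [Pi.sub_apply, sub_mul, sum_sub_distrib]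
    ring
  rw [c₁] at h₁
  rw [c₂] at h₂
  linear_combination h₁ + h₂

theorem IsSOSMD.klDiv_one_le [Nonempty A₁] [Nonempty A₂] (h : IsSOSMD Q η π₁ref π₂ref γ π₁ π₂)
    (hs : IsSaddle Q η π₁ref π₂ref μ ν) (hQ : ∀ a₁ a₂, |Q (a₁, a₂)| ≤ B) (hB : 0 ≤ B)
    (hη : 0 < η) (h₁ : IsSimplex π₁ref) (h₂ : IsSimplex π₂ref) (h₁pos : ∀ a, 0 < π₁ref a)
    (h₂pos : ∀ a, 0 < π₂ref a) (hγ : γ 0 = η) :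
    KLdiv μ (π₁ 1) + KLdiv ν (π₂ 1) ≤ 4 * η ^ 2 * B ^ 2 := by
  -- `γ 0 = η` removes the `KL(π⁽¹⁾ ‖ π⁽⁰⁾)` terms, so the cross term is paid for by the
  -- distances of `π⁽¹⁾` to the saddle point instead.
  have hstep := h.klDiv_step hs hη h₁pos h₂pos 0
  rw [hγ, sub_self, zero_mul, zero_sub] at hstep
  have hR₁ := sq_sum_abs_sub_le_two_mul_klDiv (h.fst_isSimplex h₁ h₁pos 1) hs.1.2
    (hs.fst_pos hη h₁pos)
  have hR₂ := sq_sum_abs_sub_le_two_mul_klDiv (h.snd_isSimplex h₂ h₂pos 1) hs.2.1.2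
    (hs.snd_pos hη h₂pos)
  have hC := payoff_sub_payoff_le (x := π₁ 1 - μ) (y := π₂ 0 - ν) (x' := π₁ 0 - μ)
    (y' := π₂ 1 - ν) hQ hB (sum_abs_sub_le_two (h.snd_isSimplex h₂ h₂pos 0) hs.2.1)
    (sum_abs_sub_le_two (h.fst_isSimplex h₁ h₁pos 0) hs.1)
  have hY := mul_add_sub_mul_sq_add_sq_le (b := 2 * η * B) (d₁ := ∑ a, |π₁ 1 a - μ a|)
    (d₂ := ∑ a, |π₂ 1 a - ν a|) one_pos
  have hCη := mul_le_mul_of_nonneg_left hC hη.le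
  simp only [Pi.sub_apply] at hCη
  rw [show (2 * η * B) ^ 2 / 1 = 4 * η ^ 2 * B ^ 2 by ring] at hY
  have hD : KLdiv μ (π₁ 1) + KLdiv ν (π₂ 1) = -(KLdiv (π₁ 1) μ + KLdiv (π₂ 1) ν)
      + η * (payoff Q (π₁ 1 - μ) (π₂ 0 - ν) - payoff Q (π₁ 0 - μ) (π₂ 1 - ν)) :=
    mul_left_cancel₀ hη.ne' (by linear_combination hstep)
  linarith

theorem IsSOSMD.klDiv_succ_le [Nonempty A₁] [Nonempty A₂] (h : IsSOSMD Q η π₁ref π₂ref γ π₁ π₂)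
    (hs : IsSaddle Q η π₁ref π₂ref μ ν) (hQ : ∀ a₁ a₂, |Q (a₁, a₂)| ≤ B) (hB : 0 ≤ B)
    (hη : 0 < η) (h₁ : IsSimplex π₁ref) (h₂ : IsSimplex π₂ref) (h₁pos : ∀ a, 0 < π₁ref a)
    (h₂pos : ∀ a, 0 < π₂ref a) {t : ℕ} (hγ : γ t = 2 * η / ((t : ℝ) + 2)) (ht : 1 ≤ t) :
    (t + 2) * (KLdiv μ (π₁ (t + 1)) + KLdiv ν (π₂ (t + 1)))
      ≤ t * (KLdiv μ (π₁ t) + KLdiv ν (π₂ t)) + 16 * η ^ 2 * B ^ 2 / t := by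
  have ht' : (0 : ℝ) < t := by exact_mod_cast ht
  have hstep := h.klDiv_step hs hη h₁pos h₂pos t
  rw [hγ] at hstep
  have hK₁ := sq_sum_abs_sub_le_two_mul_klDiv (h.fst_isSimplex h₁ h₁pos (t + 1))
    (h.fst_isSimplex h₁ h₁pos t).2 (h.fst_pos h₁pos t)
  have hK₂ := sq_sum_abs_sub_le_two_mul_klDiv (h.snd_isSimplex h₂ h₂pos (t + 1))
    (h.snd_isSimplex h₂ h₂pos t).2 (h.snd_pos h₂pos t)
  have hR₁ := klDiv_nonneg (h.fst_isSimplex h₁ h₁pos (t + 1)) hs.1.2 (hs.fst_pos hη h₁pos)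
  have hR₂ := klDiv_nonneg (h.snd_isSimplex h₂ h₂pos (t + 1)) hs.2.1.2 (hs.snd_pos hη h₂pos)
  have hC := payoff_sub_payoff_le (x := π₁ (t + 1) - π₁ t) (y := π₂ t - ν) (x' := π₁ t - μ)
    (y' := π₂ (t + 1) - π₂ t) hQ hB (sum_abs_sub_le_two (h.snd_isSimplex h₂ h₂pos t) hs.2.1)
    (sum_abs_sub_le_two (h.fst_isSimplex h₁ h₁pos t) hs.1)
  rw [← payoff_sub_payoff_eq] at hC
  have hY := mul_add_sub_mul_sq_add_sq_le (b := 4 * η * B) (d₁ := ∑ a, |π₁ (t + 1) a - π₁ t a|)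
    (d₂ := ∑ a, |π₂ (t + 1) a - π₂ t a|) ht'
  have hD : (t + 2) * (KLdiv μ (π₁ (t + 1)) + KLdiv ν (π₂ (t + 1)))
      = t * (KLdiv μ (π₁ t) + KLdiv ν (π₂ t)
          - (KLdiv (π₁ (t + 1)) (π₁ t) + KLdiv (π₂ (t + 1)) (π₂ t)))
        - 2 * (KLdiv (π₁ (t + 1)) μ + KLdiv (π₂ (t + 1)) ν)
        + 2 * η * (payoff Q (π₁ (t + 1) - μ) (π₂ t - ν)
          - payoff Q (π₁ t - μ) (π₂ (t + 1) - ν)) := by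
    field_simp at hstep
    linear_combination hstep
  have hCη := mul_le_mul_of_nonneg_left hC (by positivity : (0 : ℝ) ≤ 2 * η)
  have hKt := mul_le_mul_of_nonneg_left (add_le_add hK₁ hK₂) ht'.le
  simp only [Pi.sub_apply] at hCη
  rw [show (4 * η * B) ^ 2 / t = 16 * η ^ 2 * B ^ 2 / t by ring] at hY
  linarith

end Game

theorem le_div_of_mul_succ_le {D : ℕ → ℝ} {M : ℝ} (hM : 0 ≤ M) (h₁ : D 1 ≤ 16 * M)
    (hstep : ∀ t : ℕ, 1 ≤ t → (t + 2) * D (t + 1) ≤ t * D t + 16 * M / t) :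
    ∀ T : ℕ, 1 ≤ T → D T ≤ 32 * M / (T + 1) := by
  intro T hT
  induction T, hT using Nat.le_induction with
  | base => norm_num; linarith
  | succ t ht ih =>
    have ht' : (1 : ℝ) ≤ t := by exact_mod_cast ht
    have key : t * (32 * M / (t + 1)) + 16 * M / t ≤ 32 * M := by
      have h : 16 * M / t ≤ 32 * M / (t + 1) := by
        rw [div_le_div_iff₀ (by positivity) (by positivity)]
        nlinarith
      have e : t * (32 * M / (t + 1)) + 32 * M / (t + 1) = 32 * M := by
        field_simp
      linarith
    push_cast
    rw [le_div_iff₀ (by positivity)]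
    nlinarith [hstep t ht, mul_le_mul_of_nonneg_left ih (by positivity : (0 : ℝ) ≤ t)]

/-- last-iterate ℓ1 convergence of the SOS-MD self-play iterates with
stepsizes `γ_t = 2η/(t+2)` to the unique saddle point of the KL-regularized game:
`‖μ̂ − π₁⁽ᵀ⁾‖₁ + ‖ν̂ − π₂⁽ᵀ⁾‖₁ ≤ 12 η B / √(T+1)` for every `T ≥ 1`. -/
theorem stmt17 {A₁ A₂ : Type*} [Fintype A₁] [Fintype A₂] [Nonempty A₁] [Nonempty A₂]
    (Q : A₁ × A₂ → ℝ) (B : ℝ) (hQ : ∀ a₁ a₂, |Q (a₁, a₂)| ≤ B)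
    (η : ℝ) (hη : 0 < η)
    (π₁ref : A₁ → ℝ) (π₂ref : A₂ → ℝ)
    (h₁ : IsSimplex π₁ref) (h₂ : IsSimplex π₂ref)
    (h₁pos : ∀ a, 0 < π₁ref a) (h₂pos : ∀ a, 0 < π₂ref a)
    (μhat : A₁ → ℝ) (νhat : A₂ → ℝ)
    (hsaddle : IsSaddle Q η π₁ref π₂ref μhat νhat)
    (γ : ℕ → ℝ) (hγ : ∀ t : ℕ, γ t = 2 * η / ((t : ℝ) + 2))
    (π₁ : ℕ → A₁ → ℝ) (π₂ : ℕ → A₂ → ℝ)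
    (hsos : IsSOSMD Q η π₁ref π₂ref γ π₁ π₂) :
    ∀ T : ℕ, 1 ≤ T →
      (∑ a₁, |μhat a₁ - π₁ T a₁|) + (∑ a₂, |νhat a₂ - π₂ T a₂|)
        ≤ 12 * η * B / Real.sqrt ((T : ℝ) + 1) := by
  intro T hT
  have hB : 0 ≤ B := (abs_nonneg _).trans (hQ (Classical.arbitrary A₁) (Classical.arbitrary A₂))
  have hD := le_div_of_mul_succ_le (D := fun t ↦ KLdiv μhat (π₁ t) + KLdiv νhat (π₂ t))
    (M := (η * B) ^ 2) (sq_nonneg _)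
    ((hsos.klDiv_one_le hsaddle hQ hB hη h₁ h₂ h₁pos h₂pos (by rw [hγ]; norm_num)).trans
      (by nlinarith [sq_nonneg (η * B)]))
    (fun t ht ↦ (hsos.klDiv_succ_le hsaddle hQ hB hη h₁ h₂ h₁pos h₂pos (hγ t) ht).trans_eq
      (by ring)) T hT
  have hP₁ := sq_sum_abs_sub_le_two_mul_klDiv hsaddle.1 (hsos.fst_isSimplex h₁ h₁pos T).2
    (hsos.fst_pos h₁pos T)
  have hP₂ := sq_sum_abs_sub_le_two_mul_klDiv hsaddle.2.1 (hsos.snd_isSimplex h₂ h₂pos T).2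
    (hsos.snd_pos h₂pos T)
  have hTpos : (0 : ℝ) < T + 1 := by positivity
  refine (pow_le_pow_iff_left₀ (by positivity) (by positivity) two_ne_zero).1 ?_
  rw [div_pow, Real.sq_sqrt hTpos.le, le_div_iff₀ hTpos]
  rw [le_div_iff₀ hTpos] at hD
  nlinarith [sq_nonneg ((∑ a₁, |μhat a₁ - π₁ T a₁|) - ∑ a₂, |νhat a₂ - π₂ T a₂|)]
end

section
/- Let (Ω, ℱ, P) be a probability space, Z a measurable space, μ a probability measure on Z, and z₁, …, z_n : Ω → Z i.i.d. random variables with common distribution μ. Let 𝒬 be a finite nonempty set of measurable functions Z → ℝ, each bounded in absolute value by C > 0, and let δ ∈ (0,1). Then with probability at least 1 − δ, simultaneously for all Q₁, Q₂ ∈ 𝒬: ∫ (Q₁ − Q₂)² dμ ≤ (2/n)·Σ_{i=1}^n (Q₁(zᵢ) − Q₂(zᵢ))² + (80·C²/(3n))·log(2·|𝒬|/δ). -/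
open Finset MeasureTheory ProbabilityTheory Real

/-! For `0 ≤ W ≤ B` and `x = W / B ∈ [0, 1]`, convexity gives `exp (-x) ≤ 1 - x / 2`, so the
moment generating function of each `W (zᵢ)` at `-1 / B` is at most `exp (-𝔼 W / (2B))`.
The Chernoff bound at that single parameter then gives `∑ᵢ W (zᵢ) > n 𝔼 W / 2 - B L` outside
an event of probability `e^{-L}`: a lower tail with no variance term, because `W² ≤ B W`.
Applied to `W = (Q₁ - Q₂)²` with `B = 4C²` and `L = log (|𝒬|² / δ)`, a union bound over the
`|𝒬|²` pairs finishes the proof. -/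

lemma exp_neg_le_one_sub_half {x : ℝ} (h0 : 0 ≤ x) (h1 : x ≤ 1) : exp (-x) ≤ 1 - x / 2 := by
  have hconv := convexOn_exp.2 (Set.mem_univ (-1)) (Set.mem_univ 0) h0 (sub_nonneg.2 h1)
    (by ring)
  have he : exp (-1) ≤ 1 / 2 := by
    rw [exp_neg, inv_le_comm₀ (exp_pos 1) (by norm_num)]
    linarith [add_one_le_exp (1 : ℝ)]
  simp only [smul_eq_mul, mul_neg, mul_one, mul_zero, add_zero, exp_zero] at hconv
  nlinarith

section Chernoff

variable {Ω : Type*} [MeasurableSpace Ω] {P : Measure Ω} [IsProbabilityMeasure P] {B : ℝ}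

lemma mgf_neg_inv_le_exp_of_nonneg_of_le {X : Ω → ℝ} (hX : Measurable X) (hB : 0 < B)
    (h0 : ∀ ω, 0 ≤ X ω) (hle : ∀ ω, X ω ≤ B) :
    mgf X P (-B⁻¹) ≤ exp (-P[X] / (2 * B)) := by
  have hXint : Integrable X P :=
    .of_bound hX.aestronglyMeasurable B (.of_forall fun ω ↦ by
      rw [norm_of_nonneg (h0 ω)]; exact hle ω)
  have hexp_int : Integrable (fun ω ↦ exp (-B⁻¹ * X ω)) P :=
    .of_bound (by fun_prop) 1 (.of_forall fun ω ↦ by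
      rw [norm_of_nonneg (exp_pos _).le, exp_le_one_iff, neg_mul]
      exact neg_nonpos.2 (by have := h0 ω; positivity))
  calc mgf X P (-B⁻¹) ≤ ∫ ω, (1 - B⁻¹ * X ω / 2) ∂P := by
        refine integral_mono hexp_int ((integrable_const 1).sub
          ((hXint.const_mul B⁻¹).div_const 2)) fun ω ↦ ?_
        rw [neg_mul]
        refine exp_neg_le_one_sub_half (by have := h0 ω; positivity) ?_
        rw [inv_mul_le_iff₀ hB, mul_one]; exact hle ω
    _ = 1 - P[X] / (2 * B) := by
        rw [integral_sub (integrable_const 1) ((hXint.const_mul B⁻¹).div_const 2),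
          integral_div, integral_const_mul]
        simp only [integral_const, probReal_univ, smul_eq_mul, mul_one]
        field_simp
    _ ≤ exp (-P[X] / (2 * B)) := by
        have := add_one_le_exp (-P[X] / (2 * B))
        rw [neg_div] at this ⊢
        linarith

lemma measure_sum_le_half_sum_integral_sub_le {ι : Type*} [Fintype ι] {Y : ι → Ω → ℝ}
    (hmeas : ∀ i, Measurable (Y i)) (hindep : iIndepFun Y P) (hB : 0 < B)
    (h0 : ∀ i ω, 0 ≤ Y i ω) (hle : ∀ i ω, Y i ω ≤ B) (L : ℝ) :
    P {ω | ∑ i, Y i ω ≤ (∑ i, P[Y i]) / 2 - B * L} ≤ ENNReal.ofReal (exp (-L)) := by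
  set S := ∑ i, P[Y i]
  have hsum : (fun ω ↦ ∑ i, Y i ω) = ∑ i, Y i := by ext ω; simp
  have hexp_int : Integrable (fun ω ↦ exp (-B⁻¹ * ∑ i, Y i ω)) P :=
    .of_bound (by fun_prop) 1 (.of_forall fun ω ↦ by
      rw [norm_of_nonneg (exp_pos _).le, exp_le_one_iff, neg_mul]
      exact neg_nonpos.2 (by have := sum_nonneg fun i (_ : i ∈ univ) ↦ h0 i ω; positivity))
  have hmgf : mgf (fun ω ↦ ∑ i, Y i ω) P (-B⁻¹) ≤ exp (-S / (2 * B)) := by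
    rw [hsum, hindep.mgf_sum hmeas]
    calc ∏ i, mgf (Y i) P (-B⁻¹) ≤ ∏ i, exp (-P[Y i] / (2 * B)) :=
          prod_le_prod (fun _ _ ↦ mgf_nonneg) fun i _ ↦
            mgf_neg_inv_le_exp_of_nonneg_of_le (hmeas i) hB (h0 i) (hle i)
      _ = exp (-S / (2 * B)) := by rw [← exp_sum, ← sum_div, sum_neg_distrib]
  have hreal : P.real {ω | ∑ i, Y i ω ≤ S / 2 - B * L} ≤ exp (-L) :=
    calc _ ≤ exp (-(-B⁻¹) * (S / 2 - B * L)) * mgf (fun ω ↦ ∑ i, Y i ω) P (-B⁻¹) :=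
          measure_le_le_exp_mul_mgf _ (by simp [hB.le]) hexp_int
      _ ≤ exp (-(-B⁻¹) * (S / 2 - B * L)) * exp (-S / (2 * B)) := by gcongr
      _ = exp (-L) := by rw [← exp_add]; congr 1; field_simp; ring
  rw [← ofReal_measureReal]
  exact ENNReal.ofReal_le_ofReal hreal

end Chernoff

section IID

variable {Ω : Type*} [MeasurableSpace Ω] {P : Measure Ω} [IsProbabilityMeasure P]
  {Z : Type*} [MeasurableSpace Z] {μ : Measure Z} {n : ℕ} {z : Fin n → Ω → Z} {B : ℝ}

lemma measure_two_mul_empirical_add_lt_integral_le (hn : 0 < n) (hmeas : ∀ i, Measurable (z i))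
    (hindep : iIndepFun z P) (hlaw : ∀ i, P.map (z i) = μ) {W : Z → ℝ} (hW : Measurable W)
    (hB : 0 < B) (h0 : ∀ x, 0 ≤ W x) (hle : ∀ x, W x ≤ B) (L : ℝ) :
    P {ω | 2 / n * ∑ i, W (z i ω) + 2 * B * L / n < ∫ x, W x ∂μ} ≤
      ENNReal.ofReal (exp (-L)) := by
  have hmean (i : Fin n) : ∫ ω, W (z i ω) ∂P = ∫ x, W x ∂μ := by
    rw [← hlaw i, integral_map (hmeas i).aemeasurable hW.aestronglyMeasurable]
  refine le_trans (measure_mono fun ω hω ↦ ?_) (measure_sum_le_half_sum_integral_sub_le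
    (fun i ↦ hW.comp (hmeas i)) (hindep.comp (fun _ ↦ W) fun _ ↦ hW) hB (fun _ _ ↦ h0 _)
    (fun _ _ ↦ hle _) L)
  have hn' : (0 : ℝ) < n := by exact_mod_cast hn
  simp only [Set.mem_ofPred_eq, Function.comp_apply, hmean, sum_const, card_univ,
    Fintype.card_fin, nsmul_eq_mul] at hω ⊢
  have hscaled :
      (2 / n * ∑ i, W (z i ω) + 2 * B * L / n) * n = 2 * ∑ i, W (z i ω) + 2 * B * L := by
    field_simp
  nlinarith [mul_lt_mul_of_pos_right hω hn']

lemma one_sub_card_mul_le_measure_forall_integral_le {ι : Type*} (hn : 0 < n)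
    (hmeas : ∀ i, Measurable (z i)) (hindep : iIndepFun z P) (hlaw : ∀ i, P.map (z i) = μ)
    (s : Finset ι) {W : ι → Z → ℝ} (hW : ∀ k ∈ s, Measurable (W k)) (hB : 0 < B)
    (h0 : ∀ k ∈ s, ∀ x, 0 ≤ W k x) (hle : ∀ k ∈ s, ∀ x, W k x ≤ B) (L : ℝ) :
    1 - #s * ENNReal.ofReal (exp (-L)) ≤
      P {ω | ∀ k ∈ s, ∫ x, W k x ∂μ ≤ 2 / n * ∑ i, W k (z i ω) + 2 * B * L / n} := by
  set G := {ω | ∀ k ∈ s, ∫ x, W k x ∂μ ≤ 2 / n * ∑ i, W k (z i ω) + 2 * B * L / n}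
  set bad := fun k ↦ {ω | 2 / n * ∑ i, W k (z i ω) + 2 * B * L / n < ∫ x, W k x ∂μ}
  have hGc : P Gᶜ ≤ #s * ENNReal.ofReal (exp (-L)) :=
    calc P Gᶜ ≤ P (⋃ k ∈ s, bad k) := measure_mono fun ω hω ↦ by simpa [G, bad] using hω
      _ ≤ ∑ k ∈ s, P (bad k) := measure_biUnion_finset_le _ _
      _ ≤ #s * ENNReal.ofReal (exp (-L)) := by
          rw [← nsmul_eq_mul]
          exact sum_le_card_nsmul _ _ _ fun k hk ↦ measure_two_mul_empirical_add_lt_integral_le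
            hn hmeas hindep hlaw (hW k hk) hB (h0 k hk) (hle k hk) L
  calc 1 - #s * ENNReal.ofReal (exp (-L)) ≤ 1 - P Gᶜ := tsub_le_tsub_left hGc 1
    _ ≤ P G := tsub_le_iff_right.2 (by simpa using measure_univ_le_add_compl G (μ := P))

end IID

lemma sq_sub_le_four_mul_sq {a b C : ℝ} (ha : |a| ≤ C) (hb : |b| ≤ C) :
    (a - b) ^ 2 ≤ 4 * C ^ 2 := by
  nlinarith [abs_le.1 ha, abs_le.1 hb]

lemma log_sq_div_le_two_mul_log_two_mul_div {N δ : ℝ} (hN : 0 < N) (hδ0 : 0 < δ)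
    (hδ4 : δ ≤ 4) : log (N ^ 2 / δ) ≤ 2 * log (2 * N / δ) := by
  calc log (N ^ 2 / δ) ≤ log ((2 * N / δ) ^ 2) := by
        refine log_le_log (by positivity) ?_
        rw [div_pow, div_le_div_iff₀ hδ0 (by positivity)]
        nlinarith [mul_pos (pow_pos hN 2) hδ0]
    _ = 2 * log (2 * N / δ) := by rw [log_pow]; norm_num

theorem stmt18_general {Ω : Type*} [MeasurableSpace Ω] (P : Measure Ω) [IsProbabilityMeasure P]
    {Z : Type*} [MeasurableSpace Z] (μ : Measure Z)
    (n : ℕ) (hn : 0 < n) (z : Fin n → Ω → Z)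
    (hmeas : ∀ i, Measurable (z i))
    (hindep : iIndepFun z P)
    (hlaw : ∀ i, Measure.map (z i) P = μ)
    (𝒬 : Finset (Z → ℝ)) (h𝒬 : 𝒬.Nonempty)
    (h𝒬meas : ∀ Q ∈ 𝒬, Measurable Q)
    (C : ℝ) (hC : 0 < C) (hbdd : ∀ Q ∈ 𝒬, ∀ x, |Q x| ≤ C)
    (δ : ℝ) (hδ0 : 0 < δ) (hδ1 : δ < 1) :
    ENNReal.ofReal (1 - δ) ≤
      P {ω | ∀ Q₁ ∈ 𝒬, ∀ Q₂ ∈ 𝒬,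
        (∫ x, (Q₁ x - Q₂ x)^2 ∂μ)
          ≤ (2 / (n : ℝ)) * ∑ i, (Q₁ (z i ω) - Q₂ (z i ω))^2
            + (80 * C^2 / (3 * (n : ℝ))) * Real.log (2 * (𝒬.card : ℝ) / δ)} := by
  have hN : (1 : ℝ) ≤ #𝒬 := Nat.one_le_cast.2 (card_pos.2 h𝒬)
  set L := log ((#𝒬 : ℝ) ^ 2 / δ)
  have hδ : ENNReal.ofReal (1 - δ) = 1 - #(𝒬 ×ˢ 𝒬) * ENNReal.ofReal (exp (-L)) := by
    rw [exp_neg, exp_log (by positivity), inv_div, card_product, ← ENNReal.ofReal_natCast,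
      ← ENNReal.ofReal_mul (by positivity), ENNReal.ofReal_sub _ hδ0.le, ENNReal.ofReal_one]
    push_cast
    field_simp
  have hradius : 2 * (4 * C ^ 2) * L / n ≤ 80 * C ^ 2 / (3 * n) * log (2 * #𝒬 / δ) := by
    have hL := log_sq_div_le_two_mul_log_two_mul_div (by positivity) hδ0 (by linarith) (N := #𝒬)
    have hlog : 0 ≤ C ^ 2 * log (2 * #𝒬 / δ) :=
      mul_nonneg (sq_nonneg C) (log_nonneg (by rw [le_div_iff₀ hδ0]; linarith))
    calc 2 * (4 * C ^ 2) * L / n ≤ 2 * (4 * C ^ 2) * (2 * log (2 * #𝒬 / δ)) / n := by gcongr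
      _ ≤ 80 * C ^ 2 * log (2 * #𝒬 / δ) / 3 / n := by gcongr; linarith
      _ = 80 * C ^ 2 / (3 * n) * log (2 * #𝒬 / δ) := by ring
  rw [hδ]
  refine (one_sub_card_mul_le_measure_forall_integral_le hn hmeas hindep hlaw (𝒬 ×ˢ 𝒬)
    (W := fun p x ↦ (p.1 x - p.2 x) ^ 2) (B := 4 * C ^ 2) (fun p hp ↦ ?_) (by positivity)
    (fun _ _ _ ↦ sq_nonneg _) (fun p hp x ↦ ?_) L).trans
    (measure_mono fun ω hω Q₁ h₁ Q₂ h₂ ↦ ?_)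
  · rw [mem_product] at hp
    exact ((h𝒬meas _ hp.1).sub (h𝒬meas _ hp.2)).pow_const 2
  · rw [mem_product] at hp
    exact sq_sub_le_four_mul_sq (hbdd _ hp.1 x) (hbdd _ hp.2 x)
  · exact (hω (Q₁, Q₂) (mem_product.2 ⟨h₁, h₂⟩)).trans (by gcongr)

/-- uniform Bernstein-type concentration for squared differences over a
finite function class: with probability at least `1 − δ`, simultaneously for all
`Q₁, Q₂ ∈ 𝒬`, the population squared difference is bounded by twice the empirical one
plus `(80 C²/(3n)) log(2|𝒬|/δ)`. -/
theorem stmt18 {Ω : Type*} [MeasurableSpace Ω] (P : Measure Ω) [IsProbabilityMeasure P]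
    {Z : Type*} [MeasurableSpace Z] (μ : Measure Z) [IsProbabilityMeasure μ]
    (n : ℕ) (hn : 0 < n) (z : Fin n → Ω → Z)
    (hmeas : ∀ i, Measurable (z i))
    (hindep : iIndepFun z P)
    (hlaw : ∀ i, Measure.map (z i) P = μ)
    (𝒬 : Finset (Z → ℝ)) (h𝒬 : 𝒬.Nonempty)
    (h𝒬meas : ∀ Q ∈ 𝒬, Measurable Q)
    (C : ℝ) (hC : 0 < C) (hbdd : ∀ Q ∈ 𝒬, ∀ x, |Q x| ≤ C)
    (δ : ℝ) (hδ0 : 0 < δ) (hδ1 : δ < 1) :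
    ENNReal.ofReal (1 - δ) ≤
      P {ω | ∀ Q₁ ∈ 𝒬, ∀ Q₂ ∈ 𝒬,
        (∫ x, (Q₁ x - Q₂ x)^2 ∂μ)
          ≤ (2 / (n : ℝ)) * ∑ i, (Q₁ (z i ω) - Q₂ (z i ω))^2
            + (80 * C^2 / (3 * (n : ℝ))) * Real.log (2 * (𝒬.card : ℝ) / δ)} :=
  stmt18_general P μ n hn z hmeas hindep hlaw 𝒬 h𝒬 h𝒬meas C hC hbdd δ hδ0 hδ1
end

section
/- Let Z be a set, z₁, …, z_n ∈ Z fixed points, and 𝒬 a finite nonempty set of functions Z → ℝ each bounded in absolute value by C > 0, with g ∈ 𝒬. Let ε₁, …, ε_n be independent real random variables on a probability space with E[εᵢ] = 0 and |εᵢ| ≤ C almost surely, and set yᵢ = g(zᵢ) + εᵢ. Then for any δ ∈ (0,1), with probability at least 1 − δ, every minimizer Q̂ ∈ 𝒬 of the empirical squared loss f ↦ Σ_{i=1}^n (f(zᵢ) − yᵢ)² satisfies Σ_{i=1}^n (Q̂(zᵢ) − g(zᵢ))² ≤ 8·C²·log(|𝒬|/δ). -/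
/-! Comparing the empirical loss of a minimizer `Q̂` with that of `g` gives the basic inequality
`∑ (Q̂ - g)² ≤ 2 ∑ (Q̂ - g) εᵢ` on the sample points. For fixed `f`, the weighted noise
`∑ (f - g) εᵢ` is sub-Gaussian with variance proxy `C² ∑ (f - g)²` by Hoeffding's lemma, so it
exceeds `∑ (f - g)² / 2` with probability at most `exp (-∑ (f - g)² / (8 C²))`, which is at most
`δ / |𝒬|` as soon as `∑ (f - g)² > 8 C² log (|𝒬| / δ)`. A union bound over `𝒬` finishes. -/

open Finset MeasureTheory ProbabilityTheory Real

lemma sum_sq_sub_le_two_mul_sum_sub_mul_of_le {ι : Type*} (s : Finset ι) (f g e : ι → ℝ)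
    (h : ∑ i ∈ s, (f i - (g i + e i)) ^ 2 ≤ ∑ i ∈ s, (g i - (g i + e i)) ^ 2) :
    ∑ i ∈ s, (f i - g i) ^ 2 ≤ 2 * ∑ i ∈ s, (f i - g i) * e i := by
  have hexpand : ∑ i ∈ s, (f i - (g i + e i)) ^ 2
      = ∑ i ∈ s, (f i - g i) ^ 2 - 2 * ∑ i ∈ s, (f i - g i) * e i
        + ∑ i ∈ s, (g i - (g i + e i)) ^ 2 := by
    rw [mul_sum, ← sum_sub_distrib, ← sum_add_distrib]
    exact sum_congr rfl fun i _ => by ring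
  linarith

lemma exp_neg_div_le_inv_of_mul_log_le {k x s : ℝ} (hk : 0 < k) (hx : 0 < x)
    (h : k * log x ≤ s) : exp (-s / k) ≤ x⁻¹ := by
  calc exp (-s / k) ≤ exp (-log x) := by
        rw [exp_le_exp, neg_div, neg_le_neg_iff, le_div_iff₀ hk, mul_comm]
        exact h
    _ = x⁻¹ := by rw [exp_neg, exp_log hx]

lemma measure_biUnion_finset_le_ofReal {Ω ι : Type*} [MeasurableSpace Ω] {μ : Measure Ω}
    {s : Finset ι} {A : ι → Set Ω} {δ : ℝ} (hδ : 0 ≤ δ)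
    (h : ∀ i ∈ s, μ (A i) ≤ ENNReal.ofReal (δ / #s)) :
    μ (⋃ i ∈ s, A i) ≤ ENNReal.ofReal δ := by
  calc μ (⋃ i ∈ s, A i) ≤ ∑ i ∈ s, μ (A i) := measure_biUnion_finset_le s A
    _ ≤ #s • ENNReal.ofReal (δ / #s) := sum_le_card_nsmul s _ _ h
    _ = ENNReal.ofReal (#s * (δ / #s)) := by
      rw [nsmul_eq_mul, ENNReal.ofReal_mul (by positivity), ENNReal.ofReal_natCast]
    _ ≤ ENNReal.ofReal δ := by
      refine ENNReal.ofReal_le_ofReal ?_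
      rcases eq_or_ne (#s : ℝ) 0 with hs | hs
      · simpa [hs] using hδ
      · rw [mul_div_cancel₀ δ hs]

lemma ofReal_one_sub_le_measure_of_measure_compl_le {Ω : Type*} [MeasurableSpace Ω]
    {μ : Measure Ω} [IsProbabilityMeasure μ] {S : Set Ω} {δ : ℝ} (hδ : 0 ≤ δ)
    (h : μ Sᶜ ≤ ENNReal.ofReal δ) : ENNReal.ofReal (1 - δ) ≤ μ S := by
  rw [ENNReal.ofReal_sub 1 hδ, ENNReal.ofReal_one]
  refine tsub_le_iff_right.mpr ?_
  calc 1 = μ Set.univ := measure_univ.symm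
    _ ≤ μ S + μ Sᶜ := measure_univ_le_add_compl S
    _ ≤ μ S + ENNReal.ofReal δ := by gcongr

section Hoeffding

variable {Ω ι : Type*} [MeasurableSpace Ω] {P : Measure Ω} [IsProbabilityMeasure P]
  {ε : ι → Ω → ℝ} {C : ℝ}

lemma hasSubgaussianMGF_of_abs_le_of_integral_eq_zero {X : Ω → ℝ} (hm : AEMeasurable X P)
    (hb : ∀ᵐ ω ∂P, |X ω| ≤ C) (hmean : ∫ ω, X ω ∂P = 0) :
    HasSubgaussianMGF X (‖C‖₊ ^ 2) P := by
  have h := hasSubgaussianMGF_of_mem_Icc_of_integral_eq_zero hm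
    (hb.mono fun ω hω => abs_le.mp hω) hmean
  have hC : ‖C - -C‖₊ / 2 = ‖C‖₊ := by
    rw [sub_neg_eq_add, ← two_mul, nnnorm_mul]
    simp
  rwa [hC] at h

lemma measureReal_sum_mul_ge_le_of_iIndepFun (hindep : iIndepFun ε P)
    (hmeas : ∀ i, AEMeasurable (ε i) P) (hmean : ∀ i, ∫ ω, ε i ω ∂P = 0)
    (hbdd : ∀ i, ∀ᵐ ω ∂P, |ε i ω| ≤ C) (a : ι → ℝ) (s : Finset ι) {t : ℝ} (ht : 0 ≤ t) :
    P.real {ω | t ≤ ∑ i ∈ s, a i * ε i ω}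
      ≤ exp (-t ^ 2 / (2 * (C ^ 2 * ∑ i ∈ s, a i ^ 2))) := by
  have hsub : ∀ i ∈ s, HasSubgaussianMGF (fun ω => a i * ε i ω) (‖|a i| * C‖₊ ^ 2) P := by
    intro i _
    refine hasSubgaussianMGF_of_abs_le_of_integral_eq_zero ((hmeas i).const_mul _) ?_ ?_
    · filter_upwards [hbdd i] with ω hω
      rw [abs_mul]
      exact mul_le_mul_of_nonneg_left hω (abs_nonneg _)
    · rw [integral_const_mul, hmean i, mul_zero]
  have hindep' : iIndepFun (fun i ω => a i * ε i ω) P :=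
    hindep.comp (fun i x => a i * x) fun i => measurable_id.const_mul _
  have h := HasSubgaussianMGF.measure_sum_ge_le_of_iIndepFun hindep' hsub ht
  convert h using 5
  simp only [NNReal.coe_sum, NNReal.coe_pow, coe_nnnorm, norm_mul, norm_eq_abs, abs_abs,
    mul_pow, sq_abs, mul_sum]
  exact sum_congr rfl fun i _ => mul_comm _ _

lemma measure_lt_sum_sq_and_half_le_sum_mul_le (hindep : iIndepFun ε P)
    (hmeas : ∀ i, AEMeasurable (ε i) P) (hmean : ∀ i, ∫ ω, ε i ω ∂P = 0)
    (hbdd : ∀ i, ∀ᵐ ω ∂P, |ε i ω| ≤ C) (hC : C ≠ 0) (a : ι → ℝ) (s : Finset ι)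
    {x : ℝ} (hx : 0 < x) :
    P {ω | 8 * C ^ 2 * log x < ∑ i ∈ s, a i ^ 2
        ∧ (∑ i ∈ s, a i ^ 2) / 2 ≤ ∑ i ∈ s, a i * ε i ω} ≤ ENNReal.ofReal x⁻¹ := by
  set S := ∑ i ∈ s, a i ^ 2 with hS_def
  by_cases hS : 8 * C ^ 2 * log x < S
  · calc P _ ≤ P {ω | S / 2 ≤ ∑ i ∈ s, a i * ε i ω} := measure_mono fun ω hω => hω.2
      _ = ENNReal.ofReal (P.real {ω | S / 2 ≤ ∑ i ∈ s, a i * ε i ω}) :=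
        (ofReal_measureReal).symm
      _ ≤ ENNReal.ofReal (exp (-S / (8 * C ^ 2))) := by
        refine ENNReal.ofReal_le_ofReal ((measureReal_sum_mul_ge_le_of_iIndepFun hindep hmeas
          hmean hbdd a s (by positivity)).trans_eq ?_)
        rw [← hS_def]
        congr 1
        -- for `S = 0` both exponents are `0` by the convention `x / 0 = 0`
        rcases eq_or_ne S 0 with hS0 | hS0
        · simp [hS0]
        · field_simp
          ring
      _ ≤ ENNReal.ofReal x⁻¹ :=
        ENNReal.ofReal_le_ofReal (exp_neg_div_le_inv_of_mul_log_le (by positivity) hx hS.le)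
  · simp [hS]

end Hoeffding

theorem stmt19_general {Ω : Type*} [MeasurableSpace Ω] (P : Measure Ω) [IsProbabilityMeasure P]
    {Z : Type*} (n : ℕ) (z : Fin n → Z)
    (𝒬 : Finset (Z → ℝ))
    (C : ℝ) (hC : 0 < C)
    (g : Z → ℝ) (hg : g ∈ 𝒬)
    (ε : Fin n → Ω → ℝ) (hmeas : ∀ i, Measurable (ε i))
    (hindep : iIndepFun ε P)
    (hmean : ∀ i, ∫ ω, ε i ω ∂P = 0)
    (hεbdd : ∀ i, ∀ᵐ ω ∂P, |ε i ω| ≤ C)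
    (δ : ℝ) (hδ0 : 0 < δ) :
    ENNReal.ofReal (1 - δ) ≤
      P {ω | ∀ Qhat ∈ 𝒬,
        (∀ f ∈ 𝒬, ∑ i, (Qhat (z i) - (g (z i) + ε i ω))^2
            ≤ ∑ i, (f (z i) - (g (z i) + ε i ω))^2) →
        ∑ i, (Qhat (z i) - g (z i))^2 ≤ 8 * C^2 * Real.log ((𝒬.card : ℝ) / δ)} := by
  let bad (f : Z → ℝ) : Set Ω :=
    {ω | 8 * C ^ 2 * log (#𝒬 / δ) < ∑ i, (f (z i) - g (z i)) ^ 2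
      ∧ (∑ i, (f (z i) - g (z i)) ^ 2) / 2 ≤ ∑ i, (f (z i) - g (z i)) * ε i ω}
  have hbad : ∀ f ∈ 𝒬, P (bad f) ≤ ENNReal.ofReal (δ / #𝒬) := fun f hf => by
    have hcard : (0 : ℝ) < #𝒬 := by exact_mod_cast card_pos.mpr ⟨f, hf⟩
    rw [← inv_div]
    exact measure_lt_sum_sq_and_half_le_sum_mul_le hindep (fun i => (hmeas i).aemeasurable)
      hmean hεbdd hC.ne' _ _ (div_pos hcard hδ0)
  refine ofReal_one_sub_le_measure_of_measure_compl_le hδ0.le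
    ((measure_mono ?_).trans (measure_biUnion_finset_le_ofReal hδ0.le hbad))
  intro ω hω
  simp only [Set.mem_compl_iff, Set.mem_ofPred_eq, not_forall, not_le, exists_prop] at hω
  obtain ⟨Qhat, hQ, hmin, hlarge⟩ := hω
  have hbasic := sum_sq_sub_le_two_mul_sum_sub_mul_of_le univ (fun i => Qhat (z i))
    (fun i => g (z i)) (fun i => ε i ω) (hmin g hg)
  exact Set.mem_biUnion hQ ⟨hlarge, by linarith⟩

/-- least-squares error bound for a finite realizable function class with
independent zero-mean bounded noise: with probability at least `1 − δ`, every empirical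
least-squares minimizer `Q̂` satisfies `Σᵢ (Q̂(zᵢ) − g(zᵢ))² ≤ 8 C² log(|𝒬|/δ)`. -/
theorem stmt19 {Ω : Type*} [MeasurableSpace Ω] (P : Measure Ω) [IsProbabilityMeasure P]
    {Z : Type*} (n : ℕ) (hn : 0 < n) (z : Fin n → Z)
    (𝒬 : Finset (Z → ℝ)) (h𝒬 : 𝒬.Nonempty)
    (C : ℝ) (hC : 0 < C) (hbdd : ∀ f ∈ 𝒬, ∀ x, |f x| ≤ C)
    (g : Z → ℝ) (hg : g ∈ 𝒬)
    (ε : Fin n → Ω → ℝ) (hmeas : ∀ i, Measurable (ε i))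
    (hindep : iIndepFun ε P)
    (hmean : ∀ i, ∫ ω, ε i ω ∂P = 0)
    (hεbdd : ∀ i, ∀ᵐ ω ∂P, |ε i ω| ≤ C)
    (δ : ℝ) (hδ0 : 0 < δ) (hδ1 : δ < 1) :
    ENNReal.ofReal (1 - δ) ≤
      P {ω | ∀ Qhat ∈ 𝒬,
        (∀ f ∈ 𝒬, ∑ i, (Qhat (z i) - (g (z i) + ε i ω))^2
            ≤ ∑ i, (f (z i) - (g (z i) + ε i ω))^2) →
        ∑ i, (Qhat (z i) - g (z i))^2 ≤ 8 * C^2 * Real.log ((𝒬.card : ℝ) / δ)} :=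
  stmt19_general P n z 𝒬 C hC g hg ε hmeas hindep hmean hεbdd δ hδ0
end
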